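/- Suppose 0 ∈ S, x ∈ S with x > 0, and C ∈ ℝ satisfies D(0) = C and D(x) = C. Then p(x) ≤ exp( −C − x·e^{−x}/(1 − e^{−x}) ). -/

import Mathlib

open Real

/-- Poisson channel pmf: `P_{Y|X}(y|x) = x^y e^{-x} / y!` (with `0^0 = 1`, `0! = 1`). -/
noncomputable def poissonPMF (x : ℝ) (y : ℕ) : ℝ := x ^ y * Real.exp (-x) / (Nat.factorial y)

/-- Output pmf induced by a finitely supported input: `P_Y(k) = Σ_{x ∈ S} p(x) x^k e^{-x}/k!`. -/
noncomputable def outPMF (S : Finset ℝ) (p : ℝ → ℝ) (k : ℕ) : ℝ :=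
  ∑ x ∈ S, p x * poissonPMF x k

/-- Relative entropy `D(x) = Σ_k P_{Y|X}(k|x) log (P_{Y|X}(k|x) / P_Y(k))`. -/
noncomputable def relEnt (S : Finset ℝ) (p : ℝ → ℝ) (x : ℝ) : ℝ :=
  ∑' k : ℕ, poissonPMF x k * Real.log (poissonPMF x k / outPMF S p k)

/-!
Evaluating `D` at `0` gives `D(0) = -log P_Y(0)`. At `x > 0`, every output letter satisfies
`P_Y(k) ≥ p(x) P_{Y|X}(k|x)`, so each term of `D(x)` with `k ≥ 1` is at most
`-P_{Y|X}(k|x) log p(x)`, while the `k = 0` term equals `e^{-x} (D(0) - x)` exactly. Summing,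
`C = D(x) ≤ e^{-x} (C - x) - (1 - e^{-x}) log p(x)`, which rearranges to the bound.
The series `D(x)` does converge (so the `tsum` is not a junk value): its terms lie between
`P_{Y|X}(k|x) - P_Y(k)` and `-P_{Y|X}(k|x) log p(x)`.
-/

lemma sub_le_mul_log_div {a b : ℝ} (ha : 0 ≤ a) (hb : 0 < b) : a - b ≤ a * log (a / b) := by
  rcases ha.eq_or_lt with rfl | ha
  · simpa using hb.le
  have h := mul_le_mul_of_nonneg_left (one_sub_inv_le_log_of_pos (div_pos ha hb)) ha.le
  rwa [inv_div, mul_sub, mul_one, mul_div_cancel₀ _ ha.ne'] at h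

lemma summable_mul_log_div {α : Type*} {f g : α → ℝ} (hf : Summable f) (hg : Summable g)
    (hf0 : ∀ k, 0 ≤ f k) (hg0 : ∀ k, 0 < g k) {c : ℝ} (hc : ∀ k, log (f k / g k) ≤ c) :
    Summable fun k => f k * log (f k / g k) := by
  have hexcess : Summable fun k => f k * log (f k / g k) - (f k - g k) := by
    refine Summable.of_nonneg_of_le (fun k => sub_nonneg.2 (sub_le_mul_log_div (hf0 k) (hg0 k)))
      (fun k => ?_) ((hf.mul_left c).sub (hf.sub hg))
    have hupper := mul_le_mul_of_nonneg_left (hc k) (hf0 k)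
    linarith
  simpa using hexcess.add (hf.sub hg)

lemma poissonPMF_nonneg {x : ℝ} (hx : 0 ≤ x) (k : ℕ) : 0 ≤ poissonPMF x k := by
  unfold poissonPMF
  positivity

lemma poissonPMF_pos {x : ℝ} (hx : 0 < x) (k : ℕ) : 0 < poissonPMF x k := by
  unfold poissonPMF
  positivity

@[simp]
lemma poissonPMF_zero_right (x : ℝ) : poissonPMF x 0 = exp (-x) := by
  simp [poissonPMF]

lemma poissonPMF_zero_left {k : ℕ} (hk : k ≠ 0) : poissonPMF 0 k = 0 := by
  simp [poissonPMF, hk]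

lemma hasSum_poissonPMF (x : ℝ) : HasSum (poissonPMF x) 1 := by
  have h := (NormedSpace.expSeries_div_hasSum_exp x).mul_right (exp (-x))
  rw [← exp_eq_exp_ℝ, ← exp_add, add_neg_cancel, exp_zero] at h
  have hpmf : poissonPMF x = fun k => x ^ k / k.factorial * exp (-x) :=
    funext fun k => by unfold poissonPMF; ring
  rwa [hpmf]

lemma summable_outPMF (S : Finset ℝ) (p : ℝ → ℝ) : Summable (outPMF S p) :=
  summable_sum fun z _ => (hasSum_poissonPMF z).summable.mul_left (p z)

lemma relEnt_zero (S : Finset ℝ) (p : ℝ → ℝ) : relEnt S p 0 = -log (outPMF S p 0) := by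
  rw [relEnt, tsum_eq_single 0 fun k hk => by rw [poissonPMF_zero_left hk, zero_mul]]
  simp

section PositiveWeights

variable {S : Finset ℝ} {p : ℝ → ℝ} (hS : ∀ z ∈ S, 0 ≤ z) (hp : ∀ z ∈ S, 0 < p z)
include hS hp

lemma mul_poissonPMF_le_outPMF {x : ℝ} (hx : x ∈ S) (k : ℕ) :
    p x * poissonPMF x k ≤ outPMF S p k :=
  Finset.single_le_sum (fun z hz => mul_nonneg (hp z hz).le (poissonPMF_nonneg (hS z hz) k)) hx

lemma outPMF_pos {x : ℝ} (hx : x ∈ S) (hxpos : 0 < x) (k : ℕ) : 0 < outPMF S p k :=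
  (mul_pos (hp x hx) (poissonPMF_pos hxpos k)).trans_le (mul_poissonPMF_le_outPMF hS hp hx k)

lemma log_poissonPMF_div_outPMF_le {x : ℝ} (hx : x ∈ S) (hxpos : 0 < x) (k : ℕ) :
    log (poissonPMF x k / outPMF S p k) ≤ -log (p x) := by
  have hf := poissonPMF_pos hxpos k
  have hP := outPMF_pos hS hp hx hxpos k
  rw [← log_inv, ← one_div]
  refine log_le_log (div_pos hf hP) ?_
  rw [div_le_div_iff₀ hP (hp x hx), one_mul]
  linarith [mul_poissonPMF_le_outPMF hS hp hx k]

lemma relEnt_le {x : ℝ} (hx : x ∈ S) (hxpos : 0 < x) :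
    relEnt S p x ≤ exp (-x) * (relEnt S p 0 - x) + (1 - exp (-x)) * -log (p x) := by
  have hlog := log_poissonPMF_div_outPMF_le hS hp hx hxpos
  have hsummable : Summable fun k => poissonPMF x k * log (poissonPMF x k / outPMF S p k) :=
    summable_mul_log_div (hasSum_poissonPMF x).summable (summable_outPMF S p)
      (fun k => (poissonPMF_pos hxpos k).le) (outPMF_pos hS hp hx hxpos) hlog
  have hhead : poissonPMF x 0 * log (poissonPMF x 0 / outPMF S p 0)
      = exp (-x) * (relEnt S p 0 - x) := by
    rw [relEnt_zero, poissonPMF_zero_right,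
      log_div (exp_pos _).ne' (outPMF_pos hS hp hx hxpos 0).ne', log_exp]
    ring
  have htail : HasSum (fun k => poissonPMF x (k + 1) * -log (p x))
      ((1 - exp (-x)) * -log (p x)) := by
    simpa using ((hasSum_nat_add_iff' 1).2 (hasSum_poissonPMF x)).mul_right (-log (p x))
  rw [relEnt, hsummable.tsum_eq_zero_add, hhead, ← htail.tsum_eq]
  gcongr with k
  · exact (summable_nat_add_iff 1).2 hsummable
  · exact htail.summable
  · exact (poissonPMF_pos hxpos _).le
  · exact hlog _

end PositiveWeights

theorem mass_location_dependent_bound_general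
    (A : ℝ) (S : Finset ℝ) (hS : (S : Set ℝ) ⊆ Set.Icc 0 A)
    (p : ℝ → ℝ) (hp : ∀ x ∈ S, 0 < p x)
    (x : ℝ) (hx : x ∈ S) (hxpos : 0 < x)
    (C : ℝ) (hC0 : relEnt S p 0 = C) (hCx : relEnt S p x = C) :
    p x ≤ Real.exp (-C - x * Real.exp (-x) / (1 - Real.exp (-x))) := by
  have hbound := relEnt_le (fun z hz => (hS hz).1) hp hx hxpos
  rw [hC0, hCx] at hbound
  have he : 0 < 1 - exp (-x) := sub_pos.2 (exp_lt_one_iff.2 (neg_lt_zero.2 hxpos))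
  rw [← log_le_iff_le_exp (hp x hx), le_sub_iff_add_le, add_div' _ _ _ he.ne', div_le_iff₀ he]
  linarith

/-- Location-dependent bound: if `0 ∈ S`, `x ∈ S` with `x > 0`, and `D(0) = C = D(x)`, then
`p(x) ≤ exp (−C − x e^{-x}/(1 − e^{-x}))`. -/
theorem mass_location_dependent_bound
    (A : ℝ) (hA : 0 < A) (S : Finset ℝ) (hS : (S : Set ℝ) ⊆ Set.Icc 0 A)
    (p : ℝ → ℝ) (hp : ∀ x ∈ S, 0 < p x) (hpsum : ∑ x ∈ S, p x = 1)
    (h0 : (0 : ℝ) ∈ S) (x : ℝ) (hx : x ∈ S) (hxpos : 0 < x)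
    (C : ℝ) (hC0 : relEnt S p 0 = C) (hCx : relEnt S p x = C) :
    p x ≤ Real.exp (-C - x * Real.exp (-x) / (1 - Real.exp (-x))) :=
  mass_location_dependent_bound_general A S hS p hp x hx hxpos C hC0 hCx
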